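/- Let λ be Lebesgue measure on [0,1]. For every integer N ≥ 1, the finite family ⋃_{n≤N} 𝒞_n is an N^{-1/2}-net for 𝒞 = ⋃_{n≥1} 𝒞_n in L¹(λ): every C ∈ 𝒞 satisfies λ(C Δ D) ≤ N^{-1/2} for some D ∈ ⋃_{n≤N} 𝒞_n. Consequently 𝒞 is totally bounded in L¹(λ). -/

import Mathlib

/-!
A set in `𝒞ₙ` is a union of fewer than `√n` intervals of length `1/n`, so its measure is less than
`1/√n`. Hence a set of `𝒞ₙ` with `n ≤ N` is its own approximant, and one with `n > N` is within
`1/√n ≤ 1/√N` of the empty set, which lies in `𝒞₁`. Each `𝒞ₙ` is finite, so `⋃_{n ≤ N} 𝒞ₙ` is a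
finite `1/√N`-net, and taking `N ≥ ε⁻²` gives total boundedness.
-/

open MeasureTheory

/-- `IntClass n`: unions of fewer than `√n` closed intervals `[i/n, (i+1)/n]`,
`0 ≤ i ≤ n - 1` (intervals of order `n`), including the empty union. -/
def IntClass (n : ℕ) : Set (Set ℝ) :=
  {C | ∃ s : Finset ℕ, s ⊆ Finset.range n ∧ (s.card : ℝ) < Real.sqrt n ∧
    C = ⋃ i ∈ s, Set.Icc ((i : ℝ) / n) (((i : ℝ) + 1) / n)}

/-- `IntClassAll = ⋃_{n ≥ 1} IntClass n`. -/
def IntClassAll : Set (Set ℝ) := {C | ∃ n : ℕ, 1 ≤ n ∧ C ∈ IntClass n}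

lemma empty_mem_IntClass {n : ℕ} (hn : 0 < n) : ∅ ∈ IntClass n :=
  ⟨∅, Finset.empty_subset _, by simpa using hn, by simp⟩

lemma IntClass_finite (n : ℕ) : (IntClass n).Finite := by
  refine (((Finset.range n).powerset : Set (Finset ℕ)).toFinite.image
    fun s : Finset ℕ => ⋃ i ∈ s, Set.Icc ((i : ℝ) / n) (((i : ℝ) + 1) / n)).subset ?_
  rintro C ⟨s, hs, -, rfl⟩
  exact ⟨s, Finset.mem_powerset.mpr hs, rfl⟩

lemma volume_le_of_mem_IntClass {n : ℕ} {C : Set ℝ} (hC : C ∈ IntClass n) :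
    volume C ≤ ENNReal.ofReal (1 / Real.sqrt n) := by
  obtain ⟨s, -, hcard, rfl⟩ := hC
  have hn : (0 : ℝ) < n := Real.sqrt_pos.mp ((Nat.cast_nonneg _).trans_lt hcard)
  have hlen (i : ℕ) :
      volume (Set.Icc ((i : ℝ) / n) (((i : ℝ) + 1) / n)) = ENNReal.ofReal (1 / n) := by
    rw [Real.volume_Icc, add_div, add_sub_cancel_left]
  calc volume (⋃ i ∈ s, Set.Icc ((i : ℝ) / n) (((i : ℝ) + 1) / n))
      ≤ ∑ i ∈ s, volume (Set.Icc ((i : ℝ) / n) (((i : ℝ) + 1) / n)) :=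
        measure_biUnion_finset_le _ _
    _ = ENNReal.ofReal (s.card / n) := by
        rw [Finset.sum_congr rfl fun i _ => hlen i, Finset.sum_const, nsmul_eq_mul,
          ← ENNReal.ofReal_natCast, ← ENNReal.ofReal_mul (Nat.cast_nonneg _), mul_one_div]
    _ ≤ ENNReal.ofReal (1 / Real.sqrt n) := by
        refine ENNReal.ofReal_le_ofReal ?_
        rw [div_le_div_iff₀ hn (Real.sqrt_pos.mpr hn), one_mul]
        calc (s.card : ℝ) * Real.sqrt n ≤ Real.sqrt n * Real.sqrt n := by gcongr
          _ = n := Real.mul_self_sqrt hn.le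

lemma exists_mem_IntClass_symmDiff_le {N : ℕ} (hN : 1 ≤ N) {C : Set ℝ} (hC : C ∈ IntClassAll) :
    ∃ D : Set ℝ, (∃ n : ℕ, 1 ≤ n ∧ n ≤ N ∧ D ∈ IntClass n) ∧
      (volume.restrict (Set.Icc (0 : ℝ) 1)) (symmDiff C D) ≤ ENNReal.ofReal (1 / Real.sqrt N) := by
  obtain ⟨n, hn, hCn⟩ := hC
  rcases le_or_gt n N with hnN | hNn
  · exact ⟨C, ⟨n, hn, hnN, hCn⟩, by simp⟩
  · refine ⟨∅, ⟨1, le_rfl, hN, empty_mem_IntClass Nat.one_pos⟩, ?_⟩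
    calc (volume.restrict (Set.Icc (0 : ℝ) 1)) (symmDiff C ∅)
        ≤ volume C := by rw [← Set.bot_eq_empty, symmDiff_bot]; exact Measure.restrict_le_self _
      _ ≤ ENNReal.ofReal (1 / Real.sqrt n) := volume_le_of_mem_IntClass hCn
      _ ≤ ENNReal.ofReal (1 / Real.sqrt N) := by gcongr

lemma exists_nat_one_div_sqrt_le {ε : ℝ} (hε : 0 < ε) : ∃ N : ℕ, 1 ≤ N ∧ 1 / Real.sqrt N ≤ ε := by
  obtain ⟨N, hN⟩ := exists_nat_gt (ε⁻¹ ^ 2)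
  have hNpos : (0 : ℝ) < N := (by positivity : (0 : ℝ) < ε⁻¹ ^ 2).trans hN
  refine ⟨N, by exact_mod_cast hNpos, ?_⟩
  rw [one_div_le (Real.sqrt_pos.mpr hNpos) hε, one_div]
  exact Real.le_sqrt_of_sq_le hN.le

theorem stmt17 :
    (∀ N : ℕ, 1 ≤ N → ∀ C ∈ IntClassAll, ∃ D : Set ℝ,
      (∃ n : ℕ, 1 ≤ n ∧ n ≤ N ∧ D ∈ IntClass n) ∧
      (volume.restrict (Set.Icc (0 : ℝ) 1)) (symmDiff C D) ≤
        ENNReal.ofReal (1 / Real.sqrt N)) ∧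
    ∀ ε : ℝ, 0 < ε → ∃ 𝒟 : Finset (Set ℝ), ∀ C ∈ IntClassAll, ∃ D ∈ 𝒟,
      (volume.restrict (Set.Icc (0 : ℝ) 1)) (symmDiff C D) ≤ ENNReal.ofReal ε := by
  refine ⟨fun N hN C hC => exists_mem_IntClass_symmDiff_le hN hC, fun ε hε => ?_⟩
  obtain ⟨N, hN, hNε⟩ := exists_nat_one_div_sqrt_le hε
  have hfin : (⋃ n ∈ Set.Icc 1 N, IntClass n).Finite :=
    (Set.finite_Icc 1 N).biUnion fun n _ => IntClass_finite n
  refine ⟨hfin.toFinset, fun C hC => ?_⟩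
  obtain ⟨D, ⟨n, hn, hnN, hD⟩, hCD⟩ := exists_mem_IntClass_symmDiff_le hN hC
  exact ⟨D, hfin.mem_toFinset.mpr (Set.mem_biUnion ⟨hn, hnN⟩ hD),
    hCD.trans (ENNReal.ofReal_le_ofReal hNε)⟩
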